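/- For the Freund submanifold F₂ (α₁=α₂=a, β₁=β₂=b), the density f(x,y)=ab·e^{-by-(2a-b)x} on 0<x<y and ab·e^{-bx-(2a-b)y} on 0<y<x has Cov(X,Y) = (1/4)(1/a² − 1/b²); in particular the covariance is zero if and only if a=b. -/

import Mathlib

/-!
Off the null diagonal, a point of the quadrant is `(m, m + t)` or `(m + t, m)` with `m, t > 0`:
`m` is its minimum and `t = |x - y|` its gap. The shear `(m, t) ↦ (m, m + t)` preserves
Lebesgue measure and maps the quadrant onto the triangle `0 < x < y`, and on both triangles the
`F₂` density becomes `a b e^{-2am} e^{-bt}`. Hence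
`E[φ(X, Y)] = a b ∫∫ (φ(m, m + t) + φ(m + t, m)) e^{-2am - bt} dm dt`,
a formula free of the case `b = 2a` that a direct computation of the inner integral runs into,
and every moment needed reduces to the Gamma integrals `∫₀^∞ tⁿ e^{-rt} dt = n!/r^{n+1}`.
-/

open MeasureTheory Real

/-- Density of the Freund submanifold `F₂` (`α₁ = α₂ = a`, `β₁ = β₂ = b`). -/
noncomputable def freundF2 (a b : ℝ) (x y : ℝ) : ℝ :=
  if 0 < x ∧ x < y then a * b * Real.exp (-b * y - (2 * a - b) * x)
  else if 0 < y ∧ y < x then a * b * Real.exp (-b * x - (2 * a - b) * y)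
  else 0

/-- Expectation of `φ(x,y)` under the `F₂` density. -/
noncomputable def f2E (a b : ℝ) (φ : ℝ → ℝ → ℝ) : ℝ :=
  ∫ x in Set.Ioi (0:ℝ), ∫ y in Set.Ioi (0:ℝ), φ x y * freundF2 a b x y

/-- Covariance of `X` and `Y` under the `F₂` density. -/
noncomputable def f2Cov (a b : ℝ) : ℝ :=
  f2E a b (fun x y => x * y) - f2E a b (fun x _ => x) * f2E a b (fun _ y => y)

open Set
open scoped Nat

lemma integral_pow_mul_exp_neg_mul_Ioi (n : ℕ) {r : ℝ} (hr : 0 < r) :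
    ∫ t in Ioi (0 : ℝ), t ^ n * exp (-(r * t)) = n ! / r ^ (n + 1) := by
  have h := integral_rpow_mul_exp_neg_mul_Ioi (a := n + 1) (by positivity) hr
  rw [Gamma_nat_eq_factorial, add_sub_cancel_right, div_rpow zero_le_one hr.le] at h
  norm_cast at h
  simp [h, inv_mul_eq_div]

lemma integrableOn_pow_mul_exp_neg_mul_Ioi (n : ℕ) {r : ℝ} (hr : 0 < r) :
    IntegrableOn (fun t => t ^ n * exp (-(r * t))) (Ioi 0) :=
  Integrable.of_integral_ne_zero <| by
    rw [integral_pow_mul_exp_neg_mul_Ioi n hr]; positivity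

def upperTriangle : Set (ℝ × ℝ) := {p | 0 < p.1 ∧ p.1 < p.2}

lemma ae_fst_ne_snd : ∀ᵐ p : ℝ × ℝ, p.1 ≠ p.2 := by
  rw [Measure.volume_eq_prod, Measure.ae_prod_iff_ae_ae]
  · refine Filter.Eventually.of_forall fun x => ?_
    filter_upwards [compl_mem_ae_iff.mpr (measure_singleton (μ := volume) x)] with y hy
    exact Ne.symm hy
  · exact (measurableSet_diagonal (α := ℝ)).compl

lemma measurableSet_upperTriangle : MeasurableSet upperTriangle :=
  (measurableSet_lt measurable_const measurable_fst).inter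
    (measurableSet_lt measurable_fst measurable_snd)

lemma quadrant_ae_eq_upperTriangle_union :
    (Ioi 0 ×ˢ Ioi 0 : Set (ℝ × ℝ)) =ᵐ[volume]
      (upperTriangle ∪ Prod.swap ⁻¹' upperTriangle : Set _) := by
  rw [Filter.eventuallyEq_set]
  filter_upwards [ae_fst_ne_snd] with p hp
  simp only [upperTriangle, mem_prod, mem_Ioi, mem_union, mem_preimage, mem_ofPred_eq,
    Prod.fst_swap, Prod.snd_swap]
  rcases hp.lt_or_gt with h | h <;> grind

lemma shear_preimage_upperTriangle :
    (fun p : ℝ × ℝ => (p.1, p.1 + p.2)) ⁻¹' upperTriangle = Ioi 0 ×ˢ Ioi 0 := by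
  ext; simp [upperTriangle]

lemma integrableOn_upperTriangle_iff {G : ℝ × ℝ → ℝ} :
    IntegrableOn G upperTriangle ↔
      IntegrableOn (fun p => G (p.1, p.1 + p.2)) (Ioi 0 ×ˢ Ioi 0) := by
  rw [← shear_preimage_upperTriangle]
  exact ((measurePreserving_prod_add volume volume).integrableOn_comp_preimage
    (MeasurableEquiv.shearAddRight ℝ).measurableEmbedding).symm

lemma setIntegral_upperTriangle (G : ℝ × ℝ → ℝ) :
    ∫ p in upperTriangle, G p = ∫ p in Ioi 0 ×ˢ Ioi 0, G (p.1, p.1 + p.2) := by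
  rw [← shear_preimage_upperTriangle]
  exact ((measurePreserving_prod_add volume volume).setIntegral_preimage_emb
    (MeasurableEquiv.shearAddRight ℝ).measurableEmbedding G _).symm

lemma integrableOn_swap_preimage_iff {G : ℝ × ℝ → ℝ} {s : Set (ℝ × ℝ)} :
    IntegrableOn G (Prod.swap ⁻¹' s) ↔ IntegrableOn (fun p => G p.swap) s :=
  (Measure.measurePreserving_swap.integrableOn_comp_preimage
    MeasurableEquiv.prodComm.measurableEmbedding).symm

lemma setIntegral_swap_preimage (G : ℝ × ℝ → ℝ) (s : Set (ℝ × ℝ)) :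
    ∫ p in Prod.swap ⁻¹' s, G p = ∫ p in s, G p.swap := by
  have h := (Measure.measurePreserving_swap (μ := volume) (ν := (volume : Measure ℝ)))
    |>.setIntegral_preimage_emb MeasurableEquiv.prodComm.measurableEmbedding (fun p => G p.swap) s
  simp only [Prod.swap_swap] at h
  exact h

lemma disjoint_upperTriangle_swap_preimage :
    Disjoint upperTriangle (Prod.swap ⁻¹' upperTriangle) :=
  Set.disjoint_left.2 fun _ h h' => h.2.not_gt h'.2

lemma integrableOn_quadrant_of_shear {G : ℝ × ℝ → ℝ}
    (h₁ : IntegrableOn (fun p => G (p.1, p.1 + p.2)) (Ioi 0 ×ˢ Ioi 0))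
    (h₂ : IntegrableOn (fun p => G (p.1 + p.2, p.1)) (Ioi 0 ×ˢ Ioi 0)) :
    IntegrableOn G (Ioi 0 ×ˢ Ioi 0) :=
  ((integrableOn_upperTriangle_iff.2 h₁).union
    (integrableOn_swap_preimage_iff.2 (integrableOn_upperTriangle_iff.2 h₂))).congr_set_ae
    quadrant_ae_eq_upperTriangle_union

lemma setIntegral_quadrant_eq_shear {G : ℝ × ℝ → ℝ}
    (h₁ : IntegrableOn (fun p => G (p.1, p.1 + p.2)) (Ioi 0 ×ˢ Ioi 0))
    (h₂ : IntegrableOn (fun p => G (p.1 + p.2, p.1)) (Ioi 0 ×ˢ Ioi 0)) :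
    ∫ p in Ioi 0 ×ˢ Ioi 0, G p =
      ∫ p in Ioi 0 ×ˢ Ioi 0, (G (p.1, p.1 + p.2) + G (p.1 + p.2, p.1)) := by
  rw [setIntegral_congr_set quadrant_ae_eq_upperTriangle_union,
    setIntegral_union disjoint_upperTriangle_swap_preimage
      (measurableSet_upperTriangle.preimage measurable_swap) (integrableOn_upperTriangle_iff.2 h₁)
      (integrableOn_swap_preimage_iff.2 (integrableOn_upperTriangle_iff.2 h₂)),
    setIntegral_upperTriangle, setIntegral_swap_preimage, setIntegral_upperTriangle,
    integral_add h₁ h₂]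
  rfl

lemma setIntegral_quadrant_eq_integral_integral {G : ℝ × ℝ → ℝ}
    (hG : IntegrableOn G (Ioi 0 ×ˢ Ioi 0)) :
    ∫ p in Ioi 0 ×ˢ Ioi 0, G p = ∫ x in Ioi 0, ∫ y in Ioi 0, G (x, y) := by
  rw [Measure.volume_eq_prod, ← Measure.prod_restrict]
  exact integral_prod G (by rwa [Measure.prod_restrict])

noncomputable def expMonomial (r s : ℝ) (i j : ℕ) (p : ℝ × ℝ) : ℝ :=
  p.1 ^ i * exp (-(r * p.1)) * (p.2 ^ j * exp (-(s * p.2)))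

lemma fst_mul_expMonomial (r s : ℝ) (i j : ℕ) (p : ℝ × ℝ) :
    p.1 * expMonomial r s i j p = expMonomial r s (i + 1) j p := by
  simp only [expMonomial]; ring

lemma snd_mul_expMonomial (r s : ℝ) (i j : ℕ) (p : ℝ × ℝ) :
    p.2 * expMonomial r s i j p = expMonomial r s i (j + 1) p := by
  simp only [expMonomial]; ring

lemma integrableOn_expMonomial {r s : ℝ} (hr : 0 < r) (hs : 0 < s) (i j : ℕ) :
    IntegrableOn (expMonomial r s i j) (Ioi 0 ×ˢ Ioi 0) := by
  rw [IntegrableOn, Measure.volume_eq_prod, ← Measure.prod_restrict]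
  exact (integrableOn_pow_mul_exp_neg_mul_Ioi i hr).mul_prod
    (integrableOn_pow_mul_exp_neg_mul_Ioi j hs)

lemma setIntegral_expMonomial {r s : ℝ} (hr : 0 < r) (hs : 0 < s) (i j : ℕ) :
    ∫ p in Ioi 0 ×ˢ Ioi 0, expMonomial r s i j p = i ! / r ^ (i + 1) * (j ! / s ^ (j + 1)) := by
  rw [Measure.volume_eq_prod, ← Measure.prod_restrict, ← integral_pow_mul_exp_neg_mul_Ioi i hr,
    ← integral_pow_mul_exp_neg_mul_Ioi j hs]
  exact integral_prod_mul (fun x => x ^ i * exp (-(r * x))) (fun y => y ^ j * exp (-(s * y)))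

lemma freundF2_comm (a b x y : ℝ) : freundF2 a b x y = freundF2 a b y x := by
  unfold freundF2
  split_ifs with h h' <;> first | rfl | linarith [h.2, h'.2]

lemma freundF2_shear (a b : ℝ) {m t : ℝ} (hm : 0 < m) (ht : 0 < t) :
    freundF2 a b m (m + t) = a * b * expMonomial (2 * a) b 0 0 (m, t) := by
  rw [freundF2, if_pos ⟨hm, by linarith⟩, expMonomial]
  simp only [pow_zero, one_mul, ← exp_add]
  ring_nf

lemma f2E_eq_setIntegral_shear {a b : ℝ} {f : ℝ → ℝ → ℝ}
    (h₁ : IntegrableOn (fun p => f p.1 (p.1 + p.2) * expMonomial (2 * a) b 0 0 p)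
      (Ioi 0 ×ˢ Ioi 0))
    (h₂ : IntegrableOn (fun p => f (p.1 + p.2) p.1 * expMonomial (2 * a) b 0 0 p)
      (Ioi 0 ×ˢ Ioi 0)) :
    f2E a b f = a * b * ∫ p in Ioi 0 ×ˢ Ioi 0,
      (f p.1 (p.1 + p.2) + f (p.1 + p.2) p.1) * expMonomial (2 * a) b 0 0 p := by
  set G : ℝ × ℝ → ℝ := fun p => f p.1 p.2 * freundF2 a b p.1 p.2
  have hQ : MeasurableSet (Ioi (0 : ℝ) ×ˢ Ioi (0 : ℝ)) :=
    measurableSet_Ioi.prod measurableSet_Ioi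
  have e₁ : ∀ p ∈ Ioi 0 ×ˢ Ioi 0,
      G (p.1, p.1 + p.2) = a * b * (f p.1 (p.1 + p.2) * expMonomial (2 * a) b 0 0 p) :=
    fun p hp => by simp only [G, freundF2_shear a b hp.1 hp.2]; ring
  have e₂ : ∀ p ∈ Ioi 0 ×ˢ Ioi 0,
      G (p.1 + p.2, p.1) = a * b * (f (p.1 + p.2) p.1 * expMonomial (2 * a) b 0 0 p) :=
    fun p hp => by
      simp only [G, freundF2_comm a b (p.1 + p.2), freundF2_shear a b hp.1 hp.2]; ring
  have hG₁ := IntegrableOn.congr_fun (h₁.const_mul (a * b)) (fun p hp => (e₁ p hp).symm) hQ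
  have hG₂ := IntegrableOn.congr_fun (h₂.const_mul (a * b)) (fun p hp => (e₂ p hp).symm) hQ
  calc f2E a b f = ∫ p in Ioi 0 ×ˢ Ioi 0, G p :=
        (setIntegral_quadrant_eq_integral_integral
          (integrableOn_quadrant_of_shear hG₁ hG₂)).symm
    _ = ∫ p in Ioi 0 ×ˢ Ioi 0, (G (p.1, p.1 + p.2) + G (p.1 + p.2, p.1)) :=
        setIntegral_quadrant_eq_shear hG₁ hG₂
    _ = _ := by
        rw [← integral_const_mul]
        refine setIntegral_congr_fun hQ fun p hp => ?_
        rw [e₁ p hp, e₂ p hp]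
        ring

lemma f2E_swap {a b : ℝ} {f : ℝ → ℝ → ℝ}
    (h₁ : IntegrableOn (fun p => f p.1 (p.1 + p.2) * expMonomial (2 * a) b 0 0 p)
      (Ioi 0 ×ˢ Ioi 0))
    (h₂ : IntegrableOn (fun p => f (p.1 + p.2) p.1 * expMonomial (2 * a) b 0 0 p)
      (Ioi 0 ×ˢ Ioi 0)) :
    f2E a b (fun x y => f y x) = f2E a b f := by
  rw [f2E_eq_setIntegral_shear h₂ h₁, f2E_eq_setIntegral_shear h₁ h₂]
  simp only [add_comm]

lemma f2E_fst {a b : ℝ} (ha : 0 < a) (hb : 0 < b) :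
    f2E a b (fun x _ => x) = 1 / (2 * a) + 1 / (2 * b) := by
  have h2a : 0 < 2 * a := by positivity
  have hE := integrableOn_expMonomial h2a hb
  have h₁ : IntegrableOn (fun p => p.1 * expMonomial (2 * a) b 0 0 p) (Ioi 0 ×ˢ Ioi 0) := by
    simpa only [fst_mul_expMonomial, zero_add] using hE 1 0
  have h₂ : IntegrableOn (fun p => (p.1 + p.2) * expMonomial (2 * a) b 0 0 p)
      (Ioi 0 ×ˢ Ioi 0) := by
    simp only [add_mul, fst_mul_expMonomial, snd_mul_expMonomial, zero_add]
    exact (hE 1 0).add (hE 0 1)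
  calc f2E a b (fun x _ => x)
      = a * b * ∫ p in Ioi 0 ×ˢ Ioi 0,
          (2 * expMonomial (2 * a) b 1 0 p + expMonomial (2 * a) b 0 1 p) := by
        rw [f2E_eq_setIntegral_shear h₁ h₂]
        simp only [add_mul, fst_mul_expMonomial, snd_mul_expMonomial, zero_add]
        ring_nf
    _ = 1 / (2 * a) + 1 / (2 * b) := by
        rw [integral_add ((hE 1 0).const_mul 2) (hE 0 1), integral_const_mul,
          setIntegral_expMonomial h2a hb, setIntegral_expMonomial h2a hb]
        field_simp
        ring

lemma f2E_snd {a b : ℝ} (ha : 0 < a) (hb : 0 < b) :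
    f2E a b (fun _ y => y) = 1 / (2 * a) + 1 / (2 * b) := by
  have hE := integrableOn_expMonomial (by positivity : 0 < 2 * a) hb
  rw [f2E_swap (f := fun x _ => x) (by simpa only [fst_mul_expMonomial, zero_add] using hE 1 0)
    (by simp only [add_mul, fst_mul_expMonomial, snd_mul_expMonomial, zero_add]
        exact (hE 1 0).add (hE 0 1)),
    f2E_fst ha hb]

lemma f2E_mul {a b : ℝ} (ha : 0 < a) (hb : 0 < b) :
    f2E a b (fun x y => x * y) = 1 / (2 * a ^ 2) + 1 / (2 * a * b) := by
  have h2a : 0 < 2 * a := by positivity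
  have hE := integrableOn_expMonomial h2a hb
  have h : IntegrableOn (fun p => p.1 * (p.1 + p.2) * expMonomial (2 * a) b 0 0 p)
      (Ioi 0 ×ˢ Ioi 0) := by
    simp only [mul_add, add_mul, mul_assoc, fst_mul_expMonomial, snd_mul_expMonomial, zero_add]
    exact (hE 2 0).add (hE 1 1)
  calc f2E a b (fun x y => x * y)
      = a * b * ∫ p in Ioi 0 ×ˢ Ioi 0,
          (2 * expMonomial (2 * a) b 2 0 p + 2 * expMonomial (2 * a) b 1 1 p) := by
        rw [f2E_eq_setIntegral_shear h (by simpa only [mul_comm] using h)]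
        simp only [mul_add, add_mul, mul_assoc, fst_mul_expMonomial, snd_mul_expMonomial, zero_add]
        ring_nf
    _ = 1 / (2 * a ^ 2) + 1 / (2 * a * b) := by
        rw [integral_add ((hE 2 0).const_mul 2) ((hE 1 1).const_mul 2), integral_const_mul,
          integral_const_mul, setIntegral_expMonomial h2a hb, setIntegral_expMonomial h2a hb]
        rw [Nat.factorial_two]
        field_simp
        ring

theorem freundF2_covariance (a b : ℝ) (ha : 0 < a) (hb : 0 < b) :
    f2Cov a b = (1 / 4) * (1 / a ^ 2 - 1 / b ^ 2) ∧ (f2Cov a b = 0 ↔ a = b) := by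
  have hcov : f2Cov a b = (1 / 4) * (1 / a ^ 2 - 1 / b ^ 2) := by
    rw [f2Cov, f2E_mul ha hb, f2E_fst ha hb, f2E_snd ha hb]
    field_simp
    ring
  refine ⟨hcov, ?_⟩
  simp only [hcov, one_div, mul_eq_zero, inv_eq_zero, OfNat.ofNat_ne_zero, false_or, sub_eq_zero,
    inv_inj]
  exact pow_left_inj₀ ha.le hb.le two_ne_zero
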